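/- arXiv:math/0310338 — 4 statements merged into one kernel-verified Lean document; each statement's English description precedes it below -/
import Mathlib

section
/- Let U = (U_{ij}) be an n × n Haar distributed unitary random matrix, let h be a positive integer, let i_1, …, i_h, j_1, …, j_h ∈ {1, …, n}, and let k_1, …, k_h, m_1, …, m_h be positive integers. If there exists some u with 1 ≤ u ≤ n such that Σ_{r : i_r = u} (k_r − m_r) ≠ 0, or some v with 1 ≤ v ≤ n such that Σ_{r : j_r = v} (k_r − m_r) ≠ 0, then E( (U_{i_1 j_1}^{k_1} · conj(U_{i_1 j_1})^{m_1}) ⋯ (U_{i_h j_h}^{k_h} · conj(U_{i_h j_h})^{m_h}) ) = 0. -/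
/-!
Multiplying `U` on the left by a diagonal unitary `D = diag(d₁, …, dₙ)`, `|d_a| = 1`, multiplies
row `a` by `d_a`, hence multiplies the monomial `∏ U_{i_r j_r}^{k_r} conj(U_{i_r j_r})^{m_r}` by
`∏_r d_{i_r}^{k_r - m_r}`. Taking `d_u = z` with `z ^ (Σ_{i_r = u} (k_r - m_r)) = -1` and all other
`d_a = 1`, the translated integrand is the negative of the original one, so by invariance its
integral vanishes. Columns are handled by right multiplication; a left-invariant finite measure on
a measurable group is also right-invariant, by uniqueness of left-invariant measures.
-/

open MeasureTheory ProbabilityTheory Finset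

noncomputable instance Matrix.measurableSpace {m n α : Type*} [MeasurableSpace α] :
    MeasurableSpace (Matrix m n α) :=
  (inferInstance : MeasurableSpace (m → n → α))

theorem MeasureTheory.Measure.IsMulLeftInvariant.isMulRightInvariant {G : Type*}
    [MeasurableSpace G] [Group G] [MeasurableMul₂ G] [MeasurableInv G] (μ : Measure G)
    [IsFiniteMeasure μ] [IsMulLeftInvariant μ] : IsMulRightInvariant μ := by
  refine ⟨fun g => ?_⟩
  rcases eq_zero_or_neZero μ with rfl | hμ
  · exact Measure.map_zero _
  have hμ_univ : μ Set.univ ≠ 0 := measure_univ_ne_zero.2 hμ.out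
  have := measure_eq_div_smul (Measure.map (· * g) μ) μ hμ_univ (measure_ne_top μ _)
  rwa [Measure.map_apply (measurable_mul_const g) MeasurableSet.univ, Set.preimage_univ,
    ENNReal.div_self hμ_univ (measure_ne_top μ _), one_smul] at this

theorem zpow_sum {κ G : Type*} [CommGroup G] (z : G) (s : Finset κ) (e : κ → ℤ) :
    z ^ (∑ r ∈ s, e r) = ∏ r ∈ s, z ^ e r := by
  classical
  induction s using Finset.induction_on with
  | empty => simp
  | insert r s hr ih => rw [sum_insert hr, prod_insert hr, zpow_add, ih]

theorem Finset.prod_mulSingle_comp_zpow {κ ι G : Type*} [Fintype κ] [DecidableEq ι]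
    [CommGroup G] (i : κ → ι) (u : ι) (z : G) (e : κ → ℤ) :
    ∏ r, (Pi.mulSingle u z : ι → G) (i r) ^ e r =
      z ^ ∑ r ∈ univ.filter (fun r => i r = u), e r := by
  rw [zpow_sum, prod_filter]
  refine prod_congr rfl fun r _ => ?_
  rw [Pi.mulSingle_apply]
  split_ifs <;> simp

namespace Circle

theorem exists_zpow_eq_neg_one {s : ℤ} (hs : s ≠ 0) : ∃ z : Circle, ((z ^ s : Circle) : ℂ) = -1 :=
  ⟨exp (Real.pi / s), by
    rw [← exp_intCast_mul, mul_div_cancel₀ _ (Int.cast_ne_zero.2 hs), coe_exp,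
      Complex.exp_pi_mul_I]⟩

theorem coe_mul_star (z : Circle) : (z : ℂ) * star (z : ℂ) = 1 := by
  rw [← starRingEnd_apply, ← coe_inv_eq_conj, ← coe_mul, mul_inv_cancel, coe_one]

theorem coe_pow_mul_conj_pow (z : Circle) (k m : ℕ) :
    (z : ℂ) ^ k * starRingEnd ℂ z ^ m = ((z ^ ((k : ℤ) - m) : Circle) : ℂ) := by
  rw [← coe_inv_eq_conj, zpow_sub, zpow_natCast, zpow_natCast, ← inv_pow]
  simp

theorem coe_prod {κ : Type*} (s : Finset κ) (f : κ → Circle) :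
    ((∏ r ∈ s, f r : Circle) : ℂ) = ∏ r ∈ s, (f r : ℂ) :=
  map_prod coeHom f s

end Circle

namespace Matrix

instance borelSpace {m n α : Type*} [Countable m] [Countable n] [TopologicalSpace α]
    [SecondCountableTopology α] [MeasurableSpace α] [BorelSpace α] :
    BorelSpace (Matrix m n α) :=
  inferInstanceAs (BorelSpace (m → n → α))

instance secondCountableTopology {m n α : Type*} [Countable m] [Countable n]
    [TopologicalSpace α] [SecondCountableTopology α] :
    SecondCountableTopology (Matrix m n α) :=
  inferInstanceAs (SecondCountableTopology (m → n → α))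

variable {ι ι' κ : Type*}

instance UnitaryGroup.measurableMul₂ [Fintype ι] [DecidableEq ι] {α : Type*} [CommRing α]
    [StarRing α] [TopologicalSpace α] [IsTopologicalRing α] [SecondCountableTopology α]
    [MeasurableSpace α] [BorelSpace α] :
    MeasurableMul₂ (unitaryGroup ι α) :=
  have := TopologicalSpace.Subtype.secondCountableTopology (unitaryGroup ι α : Set (Matrix ι ι α))
  ContinuousMul.measurableMul₂

theorem diagonal_mem_unitaryGroup [Fintype ι] [DecidableEq ι] {α : Type*} [CommRing α]
    [StarRing α] {d : ι → α} (hd : ∀ a, d a * star (d a) = 1) : diagonal d ∈ unitaryGroup ι α := by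
  rw [mem_unitaryGroup_iff, star_eq_conjTranspose, diagonal_conjTranspose, diagonal_mul_diagonal]
  simp [hd]

def phaseDiagonal [Fintype ι] [DecidableEq ι] (d : ι → Circle) : unitaryGroup ι ℂ :=
  ⟨diagonal fun a => (d a : ℂ), diagonal_mem_unitaryGroup fun a => (d a).coe_mul_star⟩

def entryMonomial [Fintype κ] (i : κ → ι) (j : κ → ι') (k m : κ → ℕ) (U : Matrix ι ι' ℂ) : ℂ :=
  ∏ r, U (i r) (j r) ^ k r * starRingEnd ℂ (U (i r) (j r)) ^ m r

variable [Fintype κ] (i : κ → ι) (j : κ → ι') (k m : κ → ℕ)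

theorem entryMonomial_diagonal_mul [Fintype ι] [DecidableEq ι] (d : ι → Circle)
    (U : Matrix ι ι' ℂ) :
    entryMonomial i j k m (diagonal (fun a => (d a : ℂ)) * U) =
      ((∏ r, d (i r) ^ ((k r : ℤ) - m r) : Circle) : ℂ) * entryMonomial i j k m U := by
  rw [Circle.coe_prod, entryMonomial, entryMonomial, ← prod_mul_distrib]
  refine prod_congr rfl fun r _ => ?_
  rw [diagonal_mul, ← Circle.coe_pow_mul_conj_pow, map_mul]
  ring

theorem entryMonomial_mul_diagonal [Fintype ι'] [DecidableEq ι'] (d : ι' → Circle)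
    (U : Matrix ι ι' ℂ) :
    entryMonomial i j k m (U * diagonal (fun a => (d a : ℂ))) =
      ((∏ r, d (j r) ^ ((k r : ℤ) - m r) : Circle) : ℂ) * entryMonomial i j k m U := by
  rw [Circle.coe_prod, entryMonomial, entryMonomial, ← prod_mul_distrib]
  refine prod_congr rfl fun r _ => ?_
  rw [mul_diagonal, ← Circle.coe_pow_mul_conj_pow, map_mul]
  ring

end Matrix

theorem stmt6_general (n h : ℕ)
    (μ : Measure ↥(Matrix.unitaryGroup (Fin n) ℂ)) [IsProbabilityMeasure μ]
    (hinv : ∀ V : ↥(Matrix.unitaryGroup (Fin n) ℂ),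
      Measure.map (fun U => V * U) μ = μ)
    (i j : Fin h → Fin n) (k m : Fin h → ℕ)
    (himb : (∃ u : Fin n,
        ∑ r ∈ univ.filter (fun r => i r = u), ((k r : ℤ) - (m r : ℤ)) ≠ 0) ∨
      (∃ v : Fin n,
        ∑ r ∈ univ.filter (fun r => j r = v), ((k r : ℤ) - (m r : ℤ)) ≠ 0)) :
    ∫ U : ↥(Matrix.unitaryGroup (Fin n) ℂ),
      ∏ r : Fin h,
        ((U : Matrix (Fin n) (Fin n) ℂ) (i r) (j r)) ^ (k r) *
          (starRingEnd ℂ ((U : Matrix (Fin n) (Fin n) ℂ) (i r) (j r))) ^ (m r) ∂μ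
      = 0 := by
  have : μ.IsMulLeftInvariant := ⟨hinv⟩
  have := Measure.IsMulLeftInvariant.isMulRightInvariant μ
  change ∫ U, Matrix.entryMonomial i j k m (U : Matrix (Fin n) (Fin n) ℂ) ∂μ = 0
  rcases himb with ⟨u, hu⟩ | ⟨v, hv⟩
  · obtain ⟨z, hz⟩ := Circle.exists_zpow_eq_neg_one hu
    refine integral_eq_zero_of_mul_left_eq_neg (g := Matrix.phaseDiagonal (Pi.mulSingle u z))
      fun U => ?_
    rw [Matrix.UnitaryGroup.mul_val, Matrix.phaseDiagonal, Matrix.entryMonomial_diagonal_mul,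
      prod_mulSingle_comp_zpow, hz, neg_one_mul]
  · obtain ⟨z, hz⟩ := Circle.exists_zpow_eq_neg_one hv
    refine integral_eq_zero_of_mul_right_eq_neg (g := Matrix.phaseDiagonal (Pi.mulSingle v z))
      fun U => ?_
    rw [Matrix.UnitaryGroup.mul_val, Matrix.phaseDiagonal, Matrix.entryMonomial_mul_diagonal,
      prod_mulSingle_comp_zpow, hz, neg_one_mul]

/-- Lemma 3 of the paper: for a Haar distributed unitary matrix `U` (the Haar measure being
the left-invariant Borel probability measure on the unitary group), indices
`i₁,…,i_h, j₁,…,j_h` and positive exponents `k₁,…,k_h, m₁,…,m_h`, if for some row index `u`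
(or some column index `v`) the total degree `Σ_{r : i_r = u} (k_r - m_r)` is nonzero, then
`E(∏_r U_{i_r j_r}^{k_r} conj(U_{i_r j_r})^{m_r}) = 0`. -/
theorem stmt6 (n h : ℕ) (hpos : 0 < h)
    (μ : Measure ↥(Matrix.unitaryGroup (Fin n) ℂ)) [IsProbabilityMeasure μ]
    (hinv : ∀ V : ↥(Matrix.unitaryGroup (Fin n) ℂ),
      Measure.map (fun U => V * U) μ = μ)
    (i j : Fin h → Fin n) (k m : Fin h → ℕ)
    (hk : ∀ r, 0 < k r) (hm : ∀ r, 0 < m r)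
    (himb : (∃ u : Fin n,
        ∑ r ∈ univ.filter (fun r => i r = u), ((k r : ℤ) - (m r : ℤ)) ≠ 0) ∨
      (∃ v : Fin n,
        ∑ r ∈ univ.filter (fun r => j r = v), ((k r : ℤ) - (m r : ℤ)) ≠ 0)) :
    ∫ U : ↥(Matrix.unitaryGroup (Fin n) ℂ),
      ∏ r : Fin h,
        ((U : Matrix (Fin n) (Fin n) ℂ) (i r) (j r)) ^ (k r) *
          (starRingEnd ℂ ((U : Matrix (Fin n) (Fin n) ℂ) (i r) (j r))) ^ (m r) ∂μ
      = 0 :=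
  stmt6_general n h μ hinv i j k m himb
end

section
/- Let n ≥ 1 and let m > n be integers, and let k_0, k_1, …, k_{n−1} ∈ ℤ with at least one k_j ≠ 0. Then the integral over the n-dimensional torus 𝕋ⁿ (with 𝕋 = {z ∈ ℂ : |z| = 1} and normalized arclength measure dz_j = dθ_j/2π on each factor) of z_0^{k_0 m} z_1^{k_1 m} ⋯ z_{n−1}^{k_{n−1} m} · ∏_{i<j} |z_i − z_j|² equals 0. (Negative powers z^{k} for k < 0 are interpreted as conj(z)^{−k} on 𝕋.) -/
/-!
Write `|Δ(z)|² = Δ(z) · conj Δ(z)`. On `𝕋` we have `conj z = z⁻¹`, so by the Leibniz formula for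
the two Vandermonde determinants the integrand is a signed sum of monomials
`∏ i, z_i ^ (k_i m + σ(i) - τ(i))` with `σ, τ` permutations. Since `|σ(i) - τ(i)| < n < m`, the
exponent at a coordinate `j` with `k_j ≠ 0` is nonzero, and `∫_𝕋 z^p = 0` for `p ≠ 0` kills
every monomial by Fubini.
-/

open MeasureTheory Finset

/-- The normalized uniform (arclength) probability measure on the unit circle
`𝕋 = {z ∈ ℂ : |z| = 1}`, as a measure on `ℂ`: the pushforward of normalized Lebesgue
measure on `[0, 2π)` under `θ ↦ e^{iθ}`. -/
noncomputable def circleUniform : Measure ℂ :=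
  Measure.map (fun θ : ℝ => Complex.exp (θ * Complex.I))
    ((ENNReal.ofReal (2 * Real.pi))⁻¹ • volume.restrict (Set.Ioc 0 (2 * Real.pi)))

open Complex Matrix Equiv

theorem Int.mul_add_sub_ne_zero {k : ℤ} (hk : k ≠ 0) {m a b : ℕ} (ha : a < m) (hb : b < m) :
    k * m + a - b ≠ 0 := by
  rcases hk.lt_or_gt with h | h <;> nlinarith

theorem Matrix.det_vandermonde_eq_sum_perm {R : Type*} [CommRing R] {n : ℕ} (v : Fin n → R) :
    (vandermonde v).det = ∑ σ : Perm (Fin n), (Perm.sign σ : R) * ∏ i, v i ^ (σ i : ℕ) := by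
  rw [← det_transpose, det_apply']
  rfl

theorem prod_zpow_mul_det_vandermonde_mul_det_vandermonde_inv {K : Type*} [Field K] {n : ℕ}
    {v : Fin n → K} (hv : ∀ i, v i ≠ 0) (e : Fin n → ℤ) :
    (∏ i, v i ^ e i) * ((vandermonde v).det * (vandermonde fun i => (v i)⁻¹).det) =
      ∑ σ : Perm (Fin n), ∑ τ : Perm (Fin n),
        (Perm.sign σ : K) * (Perm.sign τ : K) * ∏ i, v i ^ (e i + (σ i : ℕ) - (τ i : ℕ)) := by
  rw [det_vandermonde_eq_sum_perm, det_vandermonde_eq_sum_perm, sum_mul_sum, mul_sum]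
  refine sum_congr rfl fun σ _ => ?_
  rw [mul_sum]
  refine sum_congr rfl fun τ _ => ?_
  simp only [zpow_sub₀ (hv _), zpow_add₀ (hv _), zpow_natCast, inv_pow, prod_mul_distrib,
    prod_inv_distrib, div_eq_mul_inv]
  ring

theorem Complex.ofReal_norm_sub_sq_of_norm_eq_one {a b : ℂ} (ha : ‖a‖ = 1) (hb : ‖b‖ = 1) :
    (‖a - b‖ : ℂ) ^ 2 = (b - a) * (b⁻¹ - a⁻¹) := by
  rw [inv_eq_conj ha, inv_eq_conj hb, ← map_sub, mul_conj, normSq_eq_norm_sq, norm_sub_rev]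
  push_cast
  rfl

theorem prod_zpow_mul_prod_norm_sub_sq_of_norm_eq_one {n : ℕ} {z : Fin n → ℂ}
    (hz : ∀ i, ‖z i‖ = 1) (e : Fin n → ℤ) :
    (∏ i, z i ^ e i) * ∏ i, ∏ j ∈ Ioi i, (‖z i - z j‖ : ℂ) ^ 2 =
      ∑ σ : Perm (Fin n), ∑ τ : Perm (Fin n),
        (Perm.sign σ : ℂ) * (Perm.sign τ : ℂ) * ∏ i, z i ^ (e i + (σ i : ℕ) - (τ i : ℕ)) := by
  have h_vandermonde : ∏ i, ∏ j ∈ Ioi i, (‖z i - z j‖ : ℂ) ^ 2 =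
      (vandermonde z).det * (vandermonde fun i => (z i)⁻¹).det := by
    simp only [det_vandermonde, ← prod_mul_distrib,
      ofReal_norm_sub_sq_of_norm_eq_one (hz _) (hz _)]
  rw [h_vandermonde, prod_zpow_mul_det_vandermonde_mul_det_vandermonde_inv
    (fun i h => by simpa [h] using hz i)]

theorem measurable_exp_ofReal_mul_I : Measurable fun θ : ℝ => exp (θ * I) := by fun_prop

instance : IsProbabilityMeasure circleUniform := by
  constructor
  rw [circleUniform, Measure.map_apply measurable_exp_ofReal_mul_I MeasurableSet.univ]
  simpa using ENNReal.inv_mul_cancel (by positivity) (by finiteness)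

theorem ae_norm_eq_one_circleUniform : ∀ᵐ z ∂circleUniform, ‖z‖ = 1 := by
  rw [circleUniform, ae_map_iff measurable_exp_ofReal_mul_I.aemeasurable
    (measurableSet_eq_fun measurable_norm measurable_const)]
  exact ae_of_all _ fun θ => norm_exp_ofReal_mul_I θ

theorem integrable_zpow_circleUniform (p : ℤ) : Integrable (fun z : ℂ => z ^ p) circleUniform :=
  .of_bound (measurable_id.pow_const p).aestronglyMeasurable 1 <|
    ae_norm_eq_one_circleUniform.mono fun z hz => by simp [hz]

theorem integral_zpow_circleUniform {p : ℤ} (hp : p ≠ 0) : ∫ z, z ^ p ∂circleUniform = 0 := by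
  have hc : (p : ℂ) * I ≠ 0 := by simp [hp]
  have h_exp (θ : ℝ) : exp (θ * I) ^ p = exp (p * I * θ) := by rw [← exp_int_mul]; ring_nf
  have h_period : exp (p * I * (2 * Real.pi : ℝ)) = 1 := by
    rw [← exp_int_mul_two_pi_mul_I p]; push_cast; ring_nf
  rw [circleUniform, integral_map measurable_exp_ofReal_mul_I.aemeasurable
    (measurable_id.pow_const p).aestronglyMeasurable (f := fun z => z ^ p), integral_smul_measure,
    ← intervalIntegral.integral_of_le Real.two_pi_pos.le]
  simp_rw [h_exp]
  rw [integral_exp_mul_complex hc, h_period]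
  simp

section Torus

variable {ι : Type*} [Fintype ι]

theorem ae_norm_eq_one_pi_circleUniform :
    ∀ᵐ z ∂Measure.pi (fun _ : ι => circleUniform), ∀ i, ‖z i‖ = 1 :=
  ae_all_iff.2 fun _ => (Measure.tendsto_eval_ae_ae (μ := fun _ : ι => circleUniform)).eventually
    ae_norm_eq_one_circleUniform

theorem integrable_prod_zpow_pi_circleUniform (p : ι → ℤ) :
    Integrable (fun z : ι → ℂ => ∏ i, z i ^ p i) (Measure.pi fun _ => circleUniform) :=
  .fintype_prod fun i => integrable_zpow_circleUniform (p i)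

theorem integral_prod_zpow_pi_circleUniform {p : ι → ℤ} {j : ι} (hj : p j ≠ 0) :
    ∫ z : ι → ℂ, ∏ i, z i ^ p i ∂(Measure.pi fun _ => circleUniform) = 0 := by
  rw [integral_fintype_prod_eq_prod (fun i (w : ℂ) => w ^ p i)]
  exact prod_eq_zero (mem_univ j) (integral_zpow_circleUniform hj)

end Torus

theorem stmt7_general (n m : ℕ) (hm : n < m) (k : Fin n → ℤ)
    (hk : ∃ j, k j ≠ 0) :
    ∫ z : Fin n → ℂ,
      (∏ i : Fin n, z i ^ (k i * (m : ℤ))) *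
        (∏ i : Fin n, ∏ j ∈ Ioi i, ((‖z i - z j‖ : ℂ)) ^ 2)
      ∂(Measure.pi fun _ : Fin n => circleUniform) = 0 := by
  obtain ⟨j, hj⟩ := hk
  have h_int (σ τ : Perm (Fin n)) := (integrable_prod_zpow_pi_circleUniform
    fun i => k i * m + (σ i : ℕ) - (τ i : ℕ)).const_mul ((Perm.sign σ : ℂ) * (Perm.sign τ : ℂ))
  rw [integral_congr_ae (ae_norm_eq_one_pi_circleUniform.mono fun z hz =>
      prod_zpow_mul_prod_norm_sub_sq_of_norm_eq_one hz _),
    integral_finsetSum _ fun σ _ => integrable_finsetSum _ fun τ _ => h_int σ τ]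
  refine sum_eq_zero fun σ _ => ?_
  rw [integral_finsetSum _ fun τ _ => h_int σ τ]
  refine sum_eq_zero fun τ _ => ?_
  rw [integral_const_mul, integral_prod_zpow_pi_circleUniform (j := j)
    (Int.mul_add_sub_ne_zero hj ((σ j).is_lt.trans hm) ((τ j).is_lt.trans hm)), mul_zero]

/-- For `m > n ≥ 1` and integers `k₀,…,k_{n-1}` not all zero, the integral over `𝕋ⁿ`
(with the normalized uniform measure on each factor) of
`z₀^{k₀ m} ⋯ z_{n-1}^{k_{n-1} m} · ∏_{i<j} |z_i - z_j|²` is `0`.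
(Negative powers are `zpow`, i.e. `conj` powers on the circle.) -/
theorem stmt7 (n m : ℕ) (hn : 1 ≤ n) (hm : n < m) (k : Fin n → ℤ)
    (hk : ∃ j, k j ≠ 0) :
    ∫ z : Fin n → ℂ,
      (∏ i : Fin n, z i ^ (k i * (m : ℤ))) *
        (∏ i : Fin n, ∏ j ∈ Ioi i, ((‖z i - z j‖ : ℂ)) ^ 2)
      ∂(Measure.pi fun _ : Fin n => circleUniform) = 0 :=
  stmt7_general n m hm k hk
end

section
/- Let n > m ≥ 1 be integers with n − m − 1 ≥ 0. Then the integral over D^m (where D = {z ∈ ℂ : |z| ≤ 1} and each coordinate carries Lebesgue measure on ℂ) of ∏_{1 ≤ i < j ≤ m} |z_i − z_j|² · ∏_{i=1}^m (1 − |z_i|²)^{n−m−1} equals π^m · m! · ∏_{k=0}^{m−1} [ binom(n−m+k−1, k)^{−1} · 1/(n−m+k) ], where binom denotes the binomial coefficient. -/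
/-!
Write `∏_{i<j} |z_i - z_j|² = det V(z) · conj (det V(z))` for the Vandermonde matrix `V`.
Andréief's identity turns the integral of such a product of two determinants against a product
measure into `m!` times the determinant of the Gram matrix `(∫ z^j conj(z)^k w)_{j,k}`, where
`w = (1 - |z|²)^(n-m-1)` on the unit disc. Rotating `z ↦ e^{iθ} z` multiplies the entry `(j,k)`
by `e^{i(j-k)θ}` and preserves the measure, so the Gram matrix is diagonal; its diagonal entries
are radial integrals, which reduce to Beta integrals `∫₀¹ u^k (1-u)^c du = k! c! / (k+c+1)!`.
-/

open MeasureTheory Finset Matrix Equiv ComplexConjugate Real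
open scoped Nat

section Andreief

variable {ι : Type*} [Fintype ι] [DecidableEq ι]

theorem Matrix.det_eq_sum_sign_mul_prod_apply {R : Type*} [CommRing R] (M : Matrix ι ι R) :
    M.det = ∑ σ : Perm ι, ((Perm.sign σ : ℤ) : R) * ∏ i, M i (σ i) := by
  rw [← det_transpose, det_apply']
  rfl

theorem Matrix.sum_sign_mul_sign_mul_prod_apply {R : Type*} [CommRing R] (G : Matrix ι ι R) :
    ∑ σ : Perm ι, ∑ τ : Perm ι,
        ((Perm.sign σ : ℤ) : R) * ((Perm.sign τ : ℤ) : R) * ∏ j, G (σ j) (τ j)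
      = (Fintype.card ι)! * G.det := by
  have row_permuted (σ : Perm ι) :
      ∑ τ : Perm ι, ((Perm.sign τ : ℤ) : R) * ∏ j, G (σ j) (τ j)
        = Perm.sign σ * G.det := by
    rw [← det_permute, det_eq_sum_sign_mul_prod_apply]
    rfl
  simp_rw [mul_assoc, ← mul_sum, row_permuted, ← mul_assoc, ← Int.cast_mul, ← Units.val_mul,
    Int.units_mul_self, Units.val_one, Int.cast_one, one_mul, sum_const, card_univ,
    Fintype.card_perm, nsmul_eq_mul]

variable {α 𝕜 : Type*} [MeasurableSpace α] [RCLike 𝕜]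

/-- Andréief's identity. -/
theorem integral_det_mul_det (μ : Measure α) [SigmaFinite μ] (f g : ι → α → 𝕜)
    (hfg : ∀ j k, Integrable (fun x => f j x * g k x) μ) :
    ∫ x : ι → α, (of fun i j => f i (x j)).det * (of fun i j => g i (x j)).det
        ∂(Measure.pi fun _ => μ)
      = (Fintype.card ι)! * (of fun j k => ∫ x, f j x * g k x ∂μ).det := by
  have expand (x : ι → α) :
      (of fun i j => f i (x j)).det * (of fun i j => g i (x j)).det
        = ∑ σ : Perm ι, ∑ τ : Perm ι,
            ((Perm.sign σ : ℤ) : 𝕜) * ((Perm.sign τ : ℤ) : 𝕜) *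
              ∏ j, f (σ j) (x j) * g (τ j) (x j) := by
    simp_rw [det_apply', sum_mul_sum, prod_mul_distrib, of_apply]
    exact sum_congr rfl fun σ _ => sum_congr rfl fun τ _ => mul_mul_mul_comm _ _ _ _
  have term_integrable (σ τ : Perm ι) :
      Integrable (fun x : ι → α => ∏ j, f (σ j) (x j) * g (τ j) (x j))
        (Measure.pi fun _ => μ) :=
    Integrable.fintype_prod fun j => hfg (σ j) (τ j)
  have term_integral (σ τ : Perm ι) :
      ∫ x : ι → α, ∏ j, f (σ j) (x j) * g (τ j) (x j) ∂(Measure.pi fun _ => μ)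
        = ∏ j, ∫ y, f (σ j) y * g (τ j) y ∂μ :=
    integral_fintype_prod_eq_prod fun j y => f (σ j) y * g (τ j) y
  simp_rw [expand]
  rw [integral_finsetSum _ fun σ _ => integrable_finsetSum _ fun τ _ =>
    (term_integrable σ τ).const_mul _]
  simp_rw [integral_finsetSum _ fun τ _ => (term_integrable _ τ).const_mul _,
    integral_const_mul, term_integral]
  exact sum_sign_mul_sign_mul_prod_apply (of fun j k => ∫ x, f j x * g k x ∂μ)

end Andreief

theorem norm_det_vandermonde_sq {m : ℕ} (z : Fin m → ℂ) :
    ‖(vandermonde z).det‖ ^ 2 = ∏ i, ∏ j ∈ Ioi i, ‖z i - z j‖ ^ 2 := by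
  simp_rw [det_vandermonde, norm_prod, ← prod_pow, norm_sub_rev]

theorem integral_norm_det_vandermonde_sq_mul_prod {m : ℕ} {μ : Measure ℂ} [SigmaFinite μ]
    (w : ℂ → ℝ) (hint : ∀ a b : ℕ, Integrable (fun z => z ^ a * (conj z ^ b * w z)) μ)
    (horth : Pairwise fun a b : ℕ => ∫ z, z ^ a * (conj z ^ b * w z) ∂μ = 0) :
    ∫ z : Fin m → ℂ, ‖(vandermonde z).det‖ ^ 2 * ∏ i, w (z i)
        ∂(Measure.pi fun _ => μ)
      = m ! * ∏ k : Fin m, ∫ z, ‖z‖ ^ (2 * (k : ℕ)) * w z ∂μ := by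
  have mul_conj_pow (z : ℂ) (k : ℕ) :
      z ^ k * conj z ^ k = ((‖z‖ ^ (2 * k) : ℝ) : ℂ) := by
    rw [← mul_pow, Complex.mul_conj, Complex.normSq_eq_norm_sq, pow_mul]
    push_cast; rfl
  have integrand (z : Fin m → ℂ) :
      ((‖(vandermonde z).det‖ ^ 2 * ∏ i, w (z i) : ℝ) : ℂ)
        = (of fun i j : Fin m => z j ^ (i : ℕ)).det
          * (of fun i j : Fin m => conj (z j) ^ (i : ℕ) * (w (z j) : ℂ)).det := by
    have hV : (of fun i j : Fin m => z j ^ (i : ℕ)) = (vandermonde z)ᵀ := rfl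
    have hW : (of fun i j : Fin m => conj (z j) ^ (i : ℕ) * (w (z j) : ℂ))
        = of fun i j => (w (z j) : ℂ) * (conj).mapMatrix (vandermonde z)ᵀ i j := by
      ext i j
      simp [mul_comm]
    rw [hV, hW, det_mul_row, ← RingHom.map_det, det_transpose]
    push_cast
    rw [← Complex.mul_conj']
    ring
  have gram : (of fun j k : Fin m => ∫ z, z ^ (j : ℕ) * (conj z ^ (k : ℕ) * w z) ∂μ)
      = diagonal fun k : Fin m => ∫ z, z ^ (k : ℕ) * (conj z ^ (k : ℕ) * w z) ∂μ := by
    ext j k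
    rcases eq_or_ne j k with rfl | hjk
    · simp
    · simpa [hjk] using horth (Fin.val_injective.ne hjk)
  apply Complex.ofReal_injective
  rw [← integral_complex_ofReal]
  simp_rw [integrand]
  rw [integral_det_mul_det μ (fun (i : Fin m) z => z ^ (i : ℕ))
    (fun i z => conj z ^ (i : ℕ) * w z) fun j k => hint j k, gram, det_diagonal, Fintype.card_fin]
  simp_rw [← mul_assoc, mul_conj_pow, ← Complex.ofReal_mul, integral_complex_ofReal]
  push_cast
  rfl

theorem integral_pow_mul_one_sub_pow (a c : ℕ) :
    ∫ u in (0 : ℝ)..1, u ^ a * (1 - u) ^ c = a ! * c ! / (a + c + 1)! := by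
  apply Complex.ofReal_injective
  have hbeta : ∫ u in (0 : ℝ)..1, (u : ℂ) ^ a * (1 - u) ^ c
      = Complex.betaIntegral (a + 1) (c + 1) := by
    simp_rw [Complex.betaIntegral, add_sub_cancel_right, Complex.cpow_natCast]
  push_cast
  rw [← intervalIntegral.integral_ofReal]
  push_cast
  rw [hbeta, Complex.betaIntegral_eq_Gamma_mul_div _ _ (by simp; positivity) (by simp; positivity),
    show (a + 1 + (c + 1) : ℂ) = ((a + c + 1 : ℕ) : ℂ) + 1 by push_cast; ring,
    Complex.Gamma_nat_eq_factorial, Complex.Gamma_nat_eq_factorial, Complex.Gamma_nat_eq_factorial]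

theorem integral_pow_mul_one_sub_sq_pow (a c : ℕ) :
    ∫ r in (0 : ℝ)..1, r ^ (2 * a + 1) * (1 - r ^ 2) ^ c
      = (a ! * c ! / (2 * (a + c + 1)!) : ℝ) := by
  have hsubst := intervalIntegral.integral_comp_mul_deriv (a := 0) (b := 1)
    (f := fun r : ℝ => r ^ 2) (f' := fun r => 2 * r) (g := fun u : ℝ => u ^ a * (1 - u) ^ c)
    (fun r _ => by simpa using hasDerivAt_pow 2 r) (by fun_prop) (by fun_prop)
  norm_num only [Function.comp_apply] at hsubst
  calc ∫ r in (0 : ℝ)..1, r ^ (2 * a + 1) * (1 - r ^ 2) ^ c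
      = 2⁻¹ * ∫ r in (0 : ℝ)..1, (r ^ 2) ^ a * (1 - r ^ 2) ^ c * (2 * r) := by
        rw [← intervalIntegral.integral_const_mul]
        congr 1
        ext r
        ring
    _ = _ := by
        rw [hsubst, integral_pow_mul_one_sub_pow]
        ring

theorem setIntegral_closedBall_eq_integral_indicator_norm {𝕜 : Type*} [RCLike 𝕜]
    (F : ℂ → 𝕜) (h : ℝ → 𝕜) (R : ℝ) :
    ∫ z in Metric.closedBall (0 : ℂ) R, F z * h ‖z‖
      = ∫ z, F z * (Set.Iic R).indicator h ‖z‖ := by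
  rw [← integral_indicator measurableSet_closedBall]
  congr 1
  ext z
  by_cases hz : ‖z‖ ≤ R <;> simp [Set.indicator, hz]

/-- Rotation by `u = exp (iπ / (a - b))` preserves the measure and negates the integrand. -/
theorem integral_pow_mul_conj_pow_mul_radial_eq_zero {a b : ℕ} (hab : a ≠ b) (g : ℝ → ℂ) :
    ∫ z : ℂ, z ^ a * conj z ^ b * g ‖z‖ = 0 := by
  set u := Circle.exp (π / (a - b))
  have hu : (u : ℂ) ^ a * conj (u : ℂ) ^ b = -1 := by
    have hab' : (a : ℂ) - b ≠ 0 := sub_ne_zero.mpr (by exact_mod_cast hab)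
    rw [Circle.coe_exp, ← Complex.exp_conj, ← Complex.exp_nat_mul, ← Complex.exp_nat_mul,
      ← Complex.exp_add, ← Complex.exp_pi_mul_I]
    congr 1
    simp only [map_mul, Complex.conj_ofReal, Complex.conj_I]
    push_cast
    field_simp
    ring
  have hrot := ((rotation u).measurePreserving).integral_comp
    (rotation u).toHomeomorph.measurableEmbedding
    (fun z : ℂ => z ^ a * conj z ^ b * g ‖z‖)
  have hF (z : ℂ) : (u * z) ^ a * conj (u * z) ^ b * g ‖(u : ℂ) * z‖
      = -(z ^ a * conj z ^ b * g ‖z‖) := by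
    rw [norm_mul, Circle.norm_coe, one_mul, map_mul, mul_pow, mul_pow, ← neg_one_mul, ← hu]
    ring
  simp only [rotation_apply, hF, integral_neg] at hrot
  linear_combination -hrot / 2

theorem integral_closedBall_norm_pow_mul_one_sub_norm_sq_pow (k c : ℕ) :
    ∫ z in Metric.closedBall (0 : ℂ) 1, ‖z‖ ^ (2 * k) * (1 - ‖z‖ ^ 2) ^ c
      = (π * k ! * c ! / (k + c + 1)! : ℝ) := by
  rw [setIntegral_closedBall_eq_integral_indicator_norm (fun z => ‖z‖ ^ (2 * k))
      (fun r => (1 - r ^ 2) ^ c),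
    integral_fun_norm_addHaar volume fun r => r ^ (2 * k) * (Set.Iic 1).indicator _ r]
  have radial (r : ℝ) :
      r ^ (Module.finrank ℝ ℂ - 1) •
          (r ^ (2 * k) * (Set.Iic 1).indicator (fun r => (1 - r ^ 2) ^ c) r)
        = (Set.Iic 1).indicator (fun r => r ^ (2 * k + 1) * (1 - r ^ 2) ^ c) r := by
    by_cases hr : r ≤ 1 <;> simp [Set.indicator, hr]
    ring
  simp_rw [radial]
  rw [setIntegral_indicator measurableSet_Iic, Set.Ioi_inter_Iic,
    ← intervalIntegral.integral_of_le zero_le_one, integral_pow_mul_one_sub_sq_pow]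
  simp only [Complex.finrank_real_complex, measureReal_def, Complex.volume_ball,
    ENNReal.ofReal_one, one_pow, one_mul, ENNReal.coe_toReal, NNReal.coe_real_pi, smul_eq_mul,
    nsmul_eq_mul]
  ring

theorem integral_closedBall_pow_mul_conj_pow_mul_one_sub_norm_sq_pow_eq_zero {a b : ℕ}
    (hab : a ≠ b) (c : ℕ) :
    ∫ z in Metric.closedBall (0 : ℂ) 1, z ^ a * (conj z ^ b * ((1 - ‖z‖ ^ 2) ^ c : ℝ))
      = 0 := by
  simp_rw [← mul_assoc]
  rw [setIntegral_closedBall_eq_integral_indicator_norm (fun z => z ^ a * conj z ^ b)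
    (fun r => ((1 - r ^ 2) ^ c : ℝ))]
  exact integral_pow_mul_conj_pow_mul_radial_eq_zero hab _

theorem factorial_mul_factorial_div_factorial_add_succ (k c : ℕ) :
    (k ! * c ! / (k + c + 1)! : ℝ)
      = ((k + c).choose k : ℝ)⁻¹ * ((k + c + 1 : ℕ) : ℝ)⁻¹ := by
  rw [Nat.cast_add_choose, Nat.factorial_succ]
  push_cast
  field_simp

theorem stmt18_general (n m : ℕ) (hmn : m < n) :
    ∫ z in (Set.univ.pi fun _ : Fin m => Metric.closedBall (0 : ℂ) 1),
      (∏ i : Fin m, ∏ j ∈ Ioi i, ‖z i - z j‖ ^ 2) *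
        ∏ i : Fin m, (1 - ‖z i‖ ^ 2) ^ (n - m - 1)
      ∂(Measure.pi fun _ : Fin m => (volume : Measure ℂ))
    = Real.pi ^ m * m.factorial *
        ∏ k ∈ range m, (((n - m + k - 1).choose k : ℝ))⁻¹ * ((n - m + k : ℕ) : ℝ)⁻¹ := by
  set c := n - m - 1
  have hint (a b : ℕ) :
      Integrable (fun z : ℂ => z ^ a * (conj z ^ b * ((1 - ‖z‖ ^ 2) ^ c : ℝ)))
        (volume.restrict (Metric.closedBall 0 1)) :=
    (Continuous.continuousOn (by fun_prop)).integrableOn_compact (isCompact_closedBall 0 1)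
  simp_rw [← norm_det_vandermonde_sq]
  rw [Measure.restrict_pi_pi, integral_norm_det_vandermonde_sq_mul_prod _ hint
    fun a b hab => integral_closedBall_pow_mul_conj_pow_mul_one_sub_norm_sq_pow_eq_zero hab c]
  simp_rw [integral_closedBall_norm_pow_mul_one_sub_norm_sq_pow]
  have moment (k : ℕ) : π * k ! * c ! / (k + c + 1)!
      = π * ((n - m + k - 1).choose k : ℝ)⁻¹ * ((n - m + k : ℕ) : ℝ)⁻¹ := by
    rw [mul_assoc, mul_div_assoc, factorial_mul_factorial_div_factorial_add_succ, mul_assoc,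
      show n - m + k - 1 = k + c by omega, show n - m + k = k + c + 1 by omega]
  rw [Fin.prod_univ_eq_prod_range (fun k => π * k ! * c ! / (k + c + 1)!)]
  simp only [moment, prod_mul_distrib, prod_const, card_range]
  ring

/-- The normalization integral for the eigenvalue density of truncated Haar unitaries
(Życzkowski–Sommers density): for `n > m ≥ 1`,
`∫_{D^m} ∏_{i<j} |z_i - z_j|² ∏_i (1 - |z_i|²)^{n-m-1} dz
  = π^m m! ∏_{k=0}^{m-1} binom(n-m+k-1, k)⁻¹ (n-m+k)⁻¹`,
where `D` is the closed unit disc and each coordinate carries Lebesgue measure on `ℂ`. -/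
theorem stmt18 (n m : ℕ) (hm : 1 ≤ m) (hmn : m < n) :
    ∫ z in (Set.univ.pi fun _ : Fin m => Metric.closedBall (0 : ℂ) 1),
      (∏ i : Fin m, ∏ j ∈ Ioi i, ‖z i - z j‖ ^ 2) *
        ∏ i : Fin m, (1 - ‖z i‖ ^ 2) ^ (n - m - 1)
      ∂(Measure.pi fun _ : Fin m => (volume : Measure ℂ))
    = Real.pi ^ m * m.factorial *
        ∏ k ∈ range m, (((n - m + k - 1).choose k : ℝ))⁻¹ * ((n - m + k : ℕ) : ℝ)⁻¹ :=
  stmt18_general n m hmn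
end

section
/- Fix a positive integer m and fix (ζ_1, …, ζ_m) ∈ ℂ^m. Let C_{[n,m]} = ( π^m m! ∏_{k=0}^{m−1} binom(n−m+k−1, k)^{−1} (n−m+k)^{−1} )^{−1} be the normalizing constant of the eigenvalue density of the m × m truncation of an n × n Haar unitary. Then, as n → ∞, C_{[n,m]} · (m/n)^{m(m+1)/2} · ∏_{i<j} |ζ_i − ζ_j|² · ∏_{i=1}^m (1 − m|ζ_i|²/n)^{n−m−1} converges to (m^{m(m+1)/2} / (π^m · ∏_{k=1}^m k!)) · exp(−m Σ_{i=1}^m |ζ_i|²) · ∏_{i<j} |ζ_i − ζ_j|², which is the joint eigenvalue density of the standard m × m non-selfadjoint Gaussian matrix. -/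
open Filter Finset

/-- The normalizing constant `C_{[n,m]}` of the eigenvalue density of the `m × m`
truncation of an `n × n` Haar unitary matrix. -/
noncomputable def truncConst (n m : ℕ) : ℝ :=
  (Real.pi ^ m * m.factorial *
      ∏ k ∈ range m, (((n - m + k - 1).choose k : ℝ))⁻¹ * ((n - m + k : ℕ) : ℝ)⁻¹)⁻¹

lemma asc_prod (a k : ℕ) : a.ascFactorial k = ∏ j ∈ range k, (a + j) := by
  induction k with
  | zero => simp
  | succ k ih => rw [Nat.ascFactorial_succ, prod_range_succ, ih, mul_comm]

lemma sum_range_add_one (m : ℕ) : ∑ k ∈ range m, (k + 1) = m * (m + 1) / 2 := by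
  have := Finset.sum_range_id (m + 1)
  rw [Finset.sum_range_succ'] at this
  simpa [mul_comm] using this

lemma prod_fac_Icc (m : ℕ) :
    (∏ k ∈ Icc 1 m, (k.factorial : ℝ)) = m.factorial * ∏ k ∈ range m, (k.factorial : ℝ) := by
  induction m with
  | zero => simp
  | succ m ih =>
      rw [Finset.prod_Icc_succ_top (Nat.le_add_left 1 m), ih, prod_range_succ]
      push_cast [Nat.factorial_succ]
      ring

lemma tendsto_ratio (m j : ℕ) :
    Tendsto (fun n : ℕ => ((n - m + j : ℕ) : ℝ) / n) atTop (nhds 1) := by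
  have h : Tendsto (fun n : ℕ => 1 + ((j : ℝ) - m) / n) atTop (nhds 1) := by
    have := tendsto_const_div_atTop_nhds_zero_nat ((j : ℝ) - m)
    simpa using (tendsto_const_nhds (x := (1:ℝ)) (f := atTop)).add this
  refine h.congr' ?_
  filter_upwards [eventually_ge_atTop (m + 1)] with n hn
  have hmn : m ≤ n := le_trans (Nat.le_succ m) hn
  have hn0 : (n : ℝ) ≠ 0 := Nat.cast_ne_zero.mpr (by omega)
  push_cast [Nat.cast_sub hmn]
  field_simp
  ring

/-- key natural number identity -/
lemma key_nat (b k : ℕ) :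
    (b + k).choose k * k.factorial * (b + 1 + k) = ∏ j ∈ range (k + 1), (b + 1 + j) := by
  rw [← asc_prod, Nat.ascFactorial_succ, Nat.ascFactorial_eq_factorial_mul_choose]
  ring

/-- the exponential limit -/
lemma exp_limit (m : ℕ) (c : ℝ) :
    Tendsto (fun n : ℕ => (1 - c / n) ^ (n - m - 1)) atTop (nhds (Real.exp (-c))) := by
  have h1 := Real.tendsto_one_add_div_pow_exp (-c)
  have hb : Tendsto (fun n : ℕ => 1 + (-c) / n) atTop (nhds 1) := by
    have := tendsto_const_div_atTop_nhds_zero_nat (-c)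
    simpa using (tendsto_const_nhds (x := (1:ℝ)) (f := atTop)).add this
  have h2 : Tendsto (fun n : ℕ => ((1 + (-c) / n) ^ (m + 1))⁻¹) atTop (nhds 1) := by
    simpa using (hb.pow (m + 1)).inv₀ (by norm_num)
  have h3 := h1.mul h2
  rw [mul_one] at h3
  refine h3.congr' ?_
  filter_upwards [eventually_ge_atTop (m + 1), eventually_gt_atTop ⌈|c|⌉₊] with n hn hc
  have hn0 : (0:ℝ) < n := by exact_mod_cast Nat.pos_of_ne_zero (by omega)
  have hcn : |c| < n := lt_of_le_of_lt (Nat.le_ceil _) (Nat.cast_lt.mpr hc)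
  have hlt : c / n < 1 := by
    rw [div_lt_one hn0]; exact lt_of_le_of_lt (le_abs_self c) hcn
  have ha : (1:ℝ) + (-c) / n ≠ 0 := by
    rw [neg_div, ← sub_eq_add_neg]; intro h; rw [sub_eq_zero] at h; exact absurd h.symm (ne_of_lt hlt)
  show (1 + -c / (n:ℝ)) ^ n * ((1 + -c / (n:ℝ)) ^ (m + 1))⁻¹ = (1 - c / n) ^ (n - m - 1)
  rw [Nat.sub_sub, sub_eq_add_neg, ← neg_div, pow_sub₀ _ ha hn]

/-- the main algebraic identity, valid for `n ≥ m + 1` -/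
lemma trunc_eq (m n : ℕ) (hn : m + 1 ≤ n) :
    truncConst n m * ((m : ℝ) / n) ^ (m * (m + 1) / 2) =
    ((m:ℝ) ^ (m * (m + 1) / 2) / (Real.pi ^ m * ∏ k ∈ Icc 1 m, (k.factorial : ℝ))) *
      ∏ k ∈ range m, ∏ j ∈ range (k + 1), ((n - m + j : ℕ) : ℝ) / n := by
  obtain ⟨b, hb⟩ : ∃ b, n - m = b + 1 := ⟨n - m - 1, by omega⟩
  have hn0 : (n : ℝ) ≠ 0 := Nat.cast_ne_zero.mpr (by omega)
  have hπ : Real.pi ≠ 0 := Real.pi_ne_zero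
  -- rewrite the product in truncConst
  have hprod : (∏ k ∈ range m, (((n - m + k - 1).choose k : ℝ))⁻¹ * ((n - m + k : ℕ) : ℝ)⁻¹)
      = (∏ k ∈ range m, (k.factorial : ℝ)) *
        (∏ k ∈ range m, ∏ j ∈ range (k + 1), ((n - m + j : ℕ) : ℝ))⁻¹ := by
    rw [← prod_inv_distrib, ← prod_mul_distrib]
    refine prod_congr rfl fun k _ => ?_
    have h1 : n - m + k - 1 = b + k := by omega
    have h2 : n - m + k = b + 1 + k := by omega
    have hkey := key_nat b k
    have hkeyR : (((b + k).choose k : ℝ)) * (k.factorial : ℝ) * ((b + 1 + k : ℕ) : ℝ)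
        = ∏ j ∈ range (k + 1), ((b + 1 + j : ℕ) : ℝ) := by
      exact_mod_cast congrArg (Nat.cast : ℕ → ℝ) hkey
    have hC : (((b + k).choose k : ℝ)) ≠ 0 := by
      exact_mod_cast (Nat.choose_pos (Nat.le_add_left k b)).ne'
    have hfac : (k.factorial : ℝ) ≠ 0 := by exact_mod_cast k.factorial_ne_zero
    have hak : ((b + 1 + k : ℕ) : ℝ) ≠ 0 := Nat.cast_ne_zero.mpr (by omega)
    rw [h1]
    have h3 : ∀ j ∈ range (k + 1), ((n - m + j : ℕ) : ℝ) = ((b + 1 + j : ℕ) : ℝ) := by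
      intro j _; congr 1; omega
    rw [prod_congr rfl h3, ← hkeyR, h2]
    field_simp
  have hP : (∏ k ∈ range m, ∏ j ∈ range (k + 1), ((n - m + j : ℕ) : ℝ)) ≠ 0 := by
    refine prod_ne_zero_iff.mpr fun k _ => prod_ne_zero_iff.mpr fun j _ => ?_
    exact Nat.cast_ne_zero.mpr (by omega)
  have hfacs : (∏ k ∈ range m, (k.factorial : ℝ)) ≠ 0 :=
    prod_ne_zero_iff.mpr fun k _ => by exact_mod_cast k.factorial_ne_zero
  have hmfac : (m.factorial : ℝ) ≠ 0 := by exact_mod_cast m.factorial_ne_zero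
  have hRHSprod : (∏ k ∈ range m, ∏ j ∈ range (k + 1), ((n - m + j : ℕ) : ℝ) / n)
      = (∏ k ∈ range m, ∏ j ∈ range (k + 1), ((n - m + j : ℕ) : ℝ)) /
          (n : ℝ) ^ (m * (m + 1) / 2) := by
    have : ∀ k ∈ range m, (∏ j ∈ range (k + 1), ((n - m + j : ℕ) : ℝ) / n)
        = (∏ j ∈ range (k + 1), ((n - m + j : ℕ) : ℝ)) / (n : ℝ) ^ (k + 1) := by
      intro k _
      rw [prod_div_distrib, prod_const, card_range]
    rw [prod_congr rfl this, prod_div_distrib, prod_pow_eq_pow_sum, sum_range_add_one]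
  rw [truncConst, hprod, hRHSprod, prod_fac_Icc, div_pow]
  field_simp

/-- Pointwise convergence of the rescaled eigenvalue density of `√(n/m)` times the `m × m`
truncation of an `n × n` Haar unitary to the Ginibre (standard non-selfadjoint Gaussian)
eigenvalue density: for fixed `ζ ∈ ℂ^m`,
`C_{[n,m]} (m/n)^{m(m+1)/2} ∏_{i<j} |ζ_i - ζ_j|² ∏_i (1 - m|ζ_i|²/n)^{n-m-1}` converges, as
`n → ∞`, to `(m^{m(m+1)/2} / (π^m ∏_{k=1}^m k!)) exp(-m Σ_i |ζ_i|²) ∏_{i<j} |ζ_i - ζ_j|²`. -/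
theorem stmt19 (m : ℕ) (hm : 0 < m) (ζ : Fin m → ℂ) :
    Tendsto
      (fun n : ℕ =>
        truncConst n m * ((m : ℝ) / n) ^ (m * (m + 1) / 2) *
          (∏ i : Fin m, ∏ j ∈ Ioi i, ‖ζ i - ζ j‖ ^ 2) *
          ∏ i : Fin m, (1 - m * ‖ζ i‖ ^ 2 / n) ^ (n - m - 1))
      atTop
      (nhds ((m : ℝ) ^ (m * (m + 1) / 2) / (Real.pi ^ m * ∏ k ∈ Icc 1 m, (k.factorial : ℝ)) *
        Real.exp (-(m * ∑ i : Fin m, ‖ζ i‖ ^ 2)) *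
        ∏ i : Fin m, ∏ j ∈ Ioi i, ‖ζ i - ζ j‖ ^ 2)) := by
  set T := m * (m + 1) / 2 with hT
  set L : ℝ := (m : ℝ) ^ T / (Real.pi ^ m * ∏ k ∈ Icc 1 m, (k.factorial : ℝ)) with hL
  set V : ℝ := ∏ i : Fin m, ∏ j ∈ Ioi i, ‖ζ i - ζ j‖ ^ 2 with hV
  -- the ratio product tends to 1
  have hg : Tendsto (fun n : ℕ => ∏ k ∈ range m, ∏ j ∈ range (k + 1),
      ((n - m + j : ℕ) : ℝ) / n) atTop (nhds 1) := by
    have := tendsto_finset_prod (range m)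
      (fun k _ => tendsto_finset_prod (range (k + 1)) (fun j _ => tendsto_ratio m j))
    simpa using this
  have hA : Tendsto (fun n : ℕ => truncConst n m * ((m : ℝ) / n) ^ T) atTop (nhds L) := by
    have h := hg.const_mul L
    rw [mul_one] at h
    refine h.congr' ?_
    filter_upwards [eventually_ge_atTop (m + 1)] with n hn
    rw [trunc_eq m n hn]
  have hE : Tendsto (fun n : ℕ => ∏ i : Fin m, (1 - (m : ℝ) * ‖ζ i‖ ^ 2 / n) ^ (n - m - 1))
      atTop (nhds (Real.exp (-((m : ℝ) * ∑ i : Fin m, ‖ζ i‖ ^ 2)))) := by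
    have := tendsto_finset_prod (univ : Finset (Fin m))
      (fun i _ => exp_limit m ((m : ℝ) * ‖ζ i‖ ^ 2))
    convert this using 2
    rw [← Real.exp_sum]
    congr 1
    rw [Finset.mul_sum, ← Finset.sum_neg_distrib]
  have h := (hA.mul_const V).mul hE
  convert h using 2
  all_goals ring
end
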